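/- arXiv:1905.01412 — 3 statements merged into one kernel-verified Lean document; each statement's English description precedes it below -/
import Mathlib

section
/- If {B_1,...,B_m} is an (n,m; k_1,...,k_m; λ_1,...,λ_m)-GSEDF over an abelian group G, then it is an (n,m,(k_1,...,k_m), a, λ)-SWEDF with λ = Σ_{i=1}^m λ_i·k̃/k_i, where k̃ = lcm(k_1,...,k_m) and a = Σ k_i. -/
/-- The multiset of external differences `{x - y : x ∈ X, y ∈ Y}` (with multiplicity). -/
def extDiff {G : Type*} [Sub G] (X Y : Multiset G) : Multiset G :=
  X.bind fun x => Y.map fun y => x - y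

/-- The multiset `⋃_{i ≠ j} D(B_i, B̃_j)`, where the standard weighted multiset `B̃_j`
repeats each element of `B_j` exactly `ktil / |B_j|` times. -/
def wtotal {G : Type*} [Sub G] {m : ℕ} (B : Fin m → Finset G) (ktil : ℕ) : Multiset G :=
  ∑ i : Fin m, ∑ j : Fin m,
    if i ≠ j then extDiff (B i).val ((ktil / (B j).card) • (B j).val) else 0

lemma count_extDiff_nsmul {G : Type*} [Sub G] [DecidableEq G] (X Y : Multiset G) (c : ℕ) (a : G) :
    Multiset.count a (extDiff X (c • Y)) = c * Multiset.count a (extDiff X Y) := by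
  simp [extDiff, Multiset.count_bind, Multiset.map_nsmul, Multiset.count_nsmul,
    Multiset.sum_map_mul_left]

lemma bind_map_comm' {α β γ : Type*} (X : Multiset α) (Y : Multiset β) (f : α → β → γ) :
    X.bind (fun x => Y.map (f x)) = Y.bind (fun y => X.map (fun x => f x y)) := by
  calc X.bind (fun x => Y.map (f x)) = X.bind fun x => Y.bind fun y => {f x y} := by
        simp [Multiset.bind_singleton]
    _ = Y.bind fun y => X.bind fun x => {f x y} := Multiset.bind_bind X Y
    _ = _ := by simp [Multiset.bind_singleton]

lemma extDiff_comm {G : Type*} [SubtractionMonoid G] (X Y : Multiset G) :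
    extDiff X Y = Multiset.map Neg.neg (extDiff Y X) := by
  simp only [extDiff, Multiset.map_bind, Multiset.map_map, Function.comp_def, neg_sub]
  exact bind_map_comm' X Y _

lemma count_extDiff_comm {G : Type*} [SubtractionMonoid G] [DecidableEq G]
    (X Y : Multiset G) (a : G) :
    Multiset.count a (extDiff X Y) = Multiset.count (-a) (extDiff Y X) := by
  rw [extDiff_comm X Y]
  conv_lhs => rw [← neg_neg a]
  exact Multiset.count_map_eq_count' _ _ neg_injective _

/-- A GSEDF is an SWEDF with `λ = Σ_i λ_i · k̃ / k_i`. -/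
theorem stmt4 {G : Type*} [AddCommGroup G] [Fintype G] [DecidableEq G]
    (n m : ℕ) (hn : Fintype.card G = n)
    (B : Fin m → Finset G)
    (hdisj : ∀ i j, i ≠ j → Disjoint (B i) (B j))
    (hne : ∀ i, (B i).Nonempty)
    (lam : Fin m → ℕ)
    (hGSEDF : ∀ i : Fin m, ∀ δ : G, δ ≠ 0 →
      Multiset.count δ
        (∑ j : Fin m, if j ≠ i then extDiff (B i).val (B j).val else 0) = lam i)
    (ktil : ℕ) (hktil : ktil = Finset.univ.lcm fun i => (B i).card) :
    ∀ δ : G, δ ≠ 0 →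
      Multiset.count δ (wtotal B ktil) = ∑ i : Fin m, lam i * (ktil / (B i).card) := by
  intro δ hδ
  have hδ' : (-δ : G) ≠ 0 := neg_ne_zero.mpr hδ
  unfold wtotal
  simp only [Multiset.count_sum']
  rw [Finset.sum_comm]
  refine Finset.sum_congr rfl fun j _ => ?_
  have key := hGSEDF j (-δ) hδ'
  rw [Multiset.count_sum'] at key
  simp only [apply_ite (Multiset.count (-δ)), Multiset.count_zero] at key
  calc ∑ i : Fin m, Multiset.count δ
          (if i ≠ j then extDiff (B i).val ((ktil / (B j).card) • (B j).val) else 0)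
      = ∑ i : Fin m, if i ≠ j then
          (ktil / (B j).card) * Multiset.count (-δ) (extDiff (B j).val (B i).val) else 0 := by
        refine Finset.sum_congr rfl fun i _ => ?_
        split_ifs with h
        · rw [count_extDiff_nsmul, count_extDiff_comm]
        · simp
    _ = (ktil / (B j).card) * ∑ i : Fin m, if i ≠ j then
          Multiset.count (-δ) (extDiff (B j).val (B i).val) else 0 := by
        rw [Finset.mul_sum]
        exact Finset.sum_congr rfl fun i _ => by split_ifs <;> simp
    _ = (ktil / (B j).card) * lam j := by rw [key]
    _ = lam j * (ktil / (B j).card) := mul_comm _ _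
end

section
/- Let q = 4k+1 be a prime power with k odd, α a primitive element of F_q, and D^2_i = {α^{i+2j} : 0 ≤ j ≤ 2k−1} for i = 0,1 the two cyclotomic classes of index 2. Then the multiset D(D^2_0, D^2_1) ∪ D(D^2_1, D^2_0) equals 2k copies of F_q \ {0}. -/
/-- The cyclotomic class of index 2: `D^2_i = {α^{i+2j} : 0 ≤ j ≤ 2k-1}`. -/
def cyc2 {F : Type*} [Field F] [DecidableEq F] (α : Fˣ) (k i : ℕ) : Finset F :=
  (Finset.range (2 * k)).image fun j => (α : F) ^ (i + 2 * j)

namespace Stmt9Aux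

variable {F : Type*} [Field F] [Fintype F] [DecidableEq F]

lemma pow_eq_pow_iff {α : Fˣ} {k : ℕ} (hα : orderOf α = 4 * k) {m n : ℕ} :
    (α : F) ^ m = (α : F) ^ n ↔ m ≡ n [MOD 4 * k] := by
  rw [← Units.val_pow_eq_pow_val, ← Units.val_pow_eq_pow_val]
  constructor
  · intro h
    have h2 : α ^ m = α ^ n := Units.ext h
    rwa [pow_eq_pow_iff_modEq, hα] at h2
  · intro h
    have h2 : α ^ m = α ^ n := by rw [pow_eq_pow_iff_modEq, hα]; exact h
    exact congrArg Units.val h2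

lemma mem_cyc2 {α : Fˣ} {k : ℕ} (hk : 0 < k) (hα : orderOf α = 4 * k) {i : ℕ} {x : F} :
    x ∈ cyc2 α k i ↔ ∃ m : ℕ, m % 2 = i % 2 ∧ x = (α : F) ^ m := by
  constructor
  · intro hx
    obtain ⟨j, _, rfl⟩ := Finset.mem_image.mp hx
    exact ⟨i + 2 * j, by omega, rfl⟩
  · rintro ⟨m, hm, rfl⟩
    have h4 : 2 ∣ 4 * k * i := ⟨2 * k * i, by ring⟩
    have hle : i ≤ 4 * k * i := by
      rcases Nat.eq_zero_or_pos i with h | h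
      · omega
      · exact Nat.le_mul_of_pos_left i (by omega)
    set m' := m + 4 * k * i with hm'def
    have hle' : i ≤ m' := by omega
    have hpar : i % 2 = m' % 2 := by omega
    have hdvd : 2 ∣ m' - i := (Nat.modEq_iff_dvd' hle').mp hpar
    obtain ⟨s, hs⟩ := hdvd
    have hj : s % (2 * k) < 2 * k := Nat.mod_lt _ (by omega)
    refine Finset.mem_image.mpr ⟨s % (2 * k), Finset.mem_range.mpr hj, ?_⟩
    rw [pow_eq_pow_iff hα]
    have h1 : s % (2 * k) ≡ s [MOD 2 * k] := Nat.mod_modEq s (2 * k)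
    have h2 : 2 * (s % (2 * k)) ≡ 2 * s [MOD 2 * (2 * k)] := h1.mul_left' 2
    have h22 : 2 * (2 * k) = 4 * k := by ring
    rw [h22] at h2
    have h3 : i + 2 * (s % (2 * k)) ≡ i + 2 * s [MOD 4 * k] := h2.add_left i
    have h4' : i + 2 * s = m' := by omega
    have h5 : m' ≡ m [MOD 4 * k] := by
      show m' % (4 * k) = m % (4 * k)
      rw [hm'def]
      exact Nat.add_mul_mod_self_left m (4 * k) i
    exact h3.trans (h4' ▸ h5)

lemma cyc2_congr {α : Fˣ} {k : ℕ} (hk : 0 < k) (hα : orderOf α = 4 * k) {i i' : ℕ}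
    (h : i % 2 = i' % 2) : cyc2 α k i = cyc2 α k i' := by
  ext x
  rw [mem_cyc2 hk hα, mem_cyc2 hk hα, h]

lemma mul_pow_mem {α : Fˣ} {k : ℕ} (hk : 0 < k) (hα : orderOf α = 4 * k) {i : ℕ} {x : F}
    (hx : x ∈ cyc2 α k i) (n : ℕ) : x * (α : F) ^ n ∈ cyc2 α k (i + n) := by
  obtain ⟨m, hm, rfl⟩ := (mem_cyc2 hk hα).mp hx
  exact (mem_cyc2 hk hα).mpr ⟨m + n, by omega, (pow_add _ _ _).symm⟩

lemma card_cyc2 {α : Fˣ} {k : ℕ} (hα : orderOf α = 4 * k) (i : ℕ) :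
    (cyc2 α k i).card = 2 * k := by
  rw [cyc2, Finset.card_image_of_injOn, Finset.card_range]
  intro j hj j' hj' h
  rw [Finset.coe_range, Set.mem_Iio] at hj hj'
  rw [pow_eq_pow_iff hα] at h
  have h2 : 2 * j ≡ 2 * j' [MOD 4 * k] := h.add_left_cancel' i
  have h3 : (2 * j) % (4 * k) = (2 * j') % (4 * k) := h2
  rw [Nat.mod_eq_of_lt (by omega), Nat.mod_eq_of_lt (by omega)] at h3
  omega

lemma not_mem_both {α : Fˣ} {k : ℕ} (hk : 0 < k) (hα : orderOf α = 4 * k) {x : F}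
    (h0 : x ∈ cyc2 α k 0) (h1 : x ∈ cyc2 α k 1) : False := by
  obtain ⟨m, hm, rfl⟩ := (mem_cyc2 hk hα).mp h0
  obtain ⟨m', hm', heq⟩ := (mem_cyc2 hk hα).mp h1
  rw [pow_eq_pow_iff hα] at heq
  have h2 : m ≡ m' [MOD 2] := heq.of_dvd ⟨2 * k, by ring⟩
  have h3 : m % 2 = m' % 2 := h2
  omega

/-- pairs from `cyc2 i × cyc2 j` with difference `c`. -/
def SS (α : Fˣ) (k i j : ℕ) (c : F) : Finset (F × F) :=
  ((cyc2 α k i) ×ˢ (cyc2 α k j)).filter (fun p => p.1 - p.2 = c)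

lemma count_extDiff (X Y : Finset F) (c : F) :
    (extDiff X.val Y.val).count c
      = (((X ×ˢ Y)).filter (fun p => p.1 - p.2 = c)).card := by
  have h : extDiff X.val Y.val = ((X ×ˢ Y).val).map (fun p => p.1 - p.2) := by
    rw [Finset.product_val]
    simp [extDiff, SProd.sprod, Multiset.product, Multiset.map_bind, Multiset.map_map,
      Function.comp]
  rw [h, Multiset.count_map, Finset.card_def, Finset.filter_val]
  congr 1
  exact Multiset.filter_congr fun p _ => by constructor <;> (intro h; exact h.symm)

lemma card_extDiff (X Y : Multiset F) : (extDiff X Y).card = X.card * Y.card := by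
  simp [extDiff, Multiset.card_bind, Function.comp, Multiset.map_const', Multiset.sum_replicate,
    mul_comm]

lemma SS_card_mul {α : Fˣ} {k : ℕ} (hk : 0 < k) (hα : orderOf α = 4 * k) (i j n : ℕ) (c : F) :
    (SS α k i j c).card = (SS α k (i + n) (j + n) (c * (α : F) ^ n)).card := by
  have hne : (α : F) ^ n ≠ 0 := pow_ne_zero _ (Units.ne_zero α)
  apply Finset.card_bij (fun p _ => (p.1 * (α : F) ^ n, p.2 * (α : F) ^ n))
  · intro p hp
    simp only [SS, Finset.mem_filter, Finset.mem_product] at hp ⊢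
    obtain ⟨⟨h1, h2⟩, h3⟩ := hp
    exact ⟨⟨mul_pow_mem hk hα h1 n, mul_pow_mem hk hα h2 n⟩, by rw [← sub_mul, h3]⟩
  · intro p hp q hq h
    have h1 := congrArg Prod.fst h
    have h2 := congrArg Prod.snd h
    simp only at h1 h2
    exact Prod.ext (mul_right_cancel₀ hne h1) (mul_right_cancel₀ hne h2)
  · intro b hb
    set s := 4 * k * (n + 1) - n with hsdef
    have hle : n + 1 ≤ 4 * k * (n + 1) := Nat.le_mul_of_pos_left _ (by omega)
    have hns : n + s = 4 * k * (n + 1) := by omega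
    have h2d : 2 ∣ 4 * k * (n + 1) := ⟨2 * k * (n + 1), by ring⟩
    have hpow : (α : F) ^ (n + s) = 1 := by
      rw [hns, pow_mul]
      have h1 : (α : F) ^ (4 * k) = 1 := by
        rw [← Units.val_pow_eq_pow_val, ← hα, pow_orderOf_eq_one]
        rfl
      rw [h1, one_pow]
    refine ⟨(b.1 * (α : F) ^ s, b.2 * (α : F) ^ s), ?_, ?_⟩
    · simp only [SS, Finset.mem_filter, Finset.mem_product] at hb ⊢
      obtain ⟨⟨h1, h2⟩, h3⟩ := hb
      have m1 := mul_pow_mem hk hα h1 s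
      have m2 := mul_pow_mem hk hα h2 s
      rw [cyc2_congr hk hα (show (i + n + s) % 2 = i % 2 by omega)] at m1
      rw [cyc2_congr hk hα (show (j + n + s) % 2 = j % 2 by omega)] at m2
      refine ⟨⟨m1, m2⟩, ?_⟩
      rw [← sub_mul, h3, mul_assoc, ← pow_add, hpow, mul_one]
    · have h1 : (α : F) ^ s * (α : F) ^ n = 1 := by
        rw [← pow_add, Nat.add_comm]; exact hpow
      simp only
      ext <;> simp [mul_assoc, h1]

lemma exists_pow_eq {α : Fˣ} {k : ℕ} (hcard : Fintype.card F = 4 * k + 1)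
    (hα : orderOf α = 4 * k) {x : F} (hx : x ≠ 0) : ∃ n : ℕ, x = (α : F) ^ n := by
  have hcu : Fintype.card Fˣ = 4 * k := by rw [Fintype.card_units, hcard]; omega
  have htop : Subgroup.zpowers α = ⊤ := by
    apply Subgroup.eq_top_of_card_eq
    rw [Nat.card_zpowers, hα, Nat.card_eq_fintype_card, hcu]
  have hmem : (Units.mk0 x hx) ∈ Subgroup.zpowers α := htop ▸ Subgroup.mem_top _
  rw [← mem_powers_iff_mem_zpowers] at hmem
  obtain ⟨n, hn⟩ := hmem
  have hn' : α ^ n = Units.mk0 x hx := hn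
  refine ⟨n, ?_⟩
  rw [← Units.val_pow_eq_pow_val, hn']
  rfl

end Stmt9Aux

open Stmt9Aux in
theorem stmt9 {F : Type*} [Field F] [Fintype F] [DecidableEq F]
    (k : ℕ) (hk : Odd k) (hcard : Fintype.card F = 4 * k + 1)
    (α : Fˣ) (hα : orderOf α = 4 * k) :
    extDiff (cyc2 α k 0).val (cyc2 α k 1).val +
      extDiff (cyc2 α k 1).val (cyc2 α k 0).val =
    (2 * k) • ((Finset.univ.erase (0 : F)).val) := by
  have hk0 : 0 < k := hk.pos
  set L := extDiff (cyc2 α k 0).val (cyc2 α k 1).val +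
      extDiff (cyc2 α k 1).val (cyc2 α k 0).val with hLdef
  have hcount : ∀ c : F, L.count c = (SS α k 0 1 c).card + (SS α k 1 0 c).card := by
    intro c
    rw [hLdef, Multiset.count_add, count_extDiff, count_extDiff]
    rfl
  have hzero : L.count 0 = 0 := by
    rw [hcount]
    have e1 : SS α k 0 1 (0 : F) = ∅ := by
      rw [SS, Finset.filter_eq_empty_iff]
      rintro ⟨x, y⟩ hp
      rw [Finset.mem_product] at hp
      intro h
      rw [sub_eq_zero] at h
      exact not_mem_both hk0 hα hp.1 (h ▸ hp.2)
    have e2 : SS α k 1 0 (0 : F) = ∅ := by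
      rw [SS, Finset.filter_eq_empty_iff]
      rintro ⟨x, y⟩ hp
      rw [Finset.mem_product] at hp
      intro h
      rw [sub_eq_zero] at h
      exact not_mem_both hk0 hα (h ▸ hp.2) hp.1
    rw [e1, e2]
    simp
  set m := (SS α k 0 1 (1 : F)).card + (SS α k 1 0 (1 : F)).card with hmdef
  have hm : ∀ c : F, c ≠ 0 → L.count c = m := by
    intro c hc
    obtain ⟨n, rfl⟩ := exists_pow_eq hcard hα hc
    rw [hcount]
    set t := 4 * k * (n + 1) - n with htdef
    have hle : n + 1 ≤ 4 * k * (n + 1) := Nat.le_mul_of_pos_left _ (by omega)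
    have hnt : n + t = 4 * k * (n + 1) := by omega
    have h2d : 2 ∣ 4 * k * (n + 1) := ⟨2 * k * (n + 1), by ring⟩
    have hpow : (α : F) ^ n * (α : F) ^ t = 1 := by
      rw [← pow_add, hnt, pow_mul]
      have h1 : (α : F) ^ (4 * k) = 1 := by
        rw [← Units.val_pow_eq_pow_val, ← hα, pow_orderOf_eq_one]
        rfl
      rw [h1, one_pow]
    have h01 : (SS α k 0 1 ((α : F) ^ n)).card
        = (SS α k (0 + t) (1 + t) ((α : F) ^ n * (α : F) ^ t)).card :=
      SS_card_mul hk0 hα 0 1 t _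
    have h10 : (SS α k 1 0 ((α : F) ^ n)).card
        = (SS α k (1 + t) (0 + t) ((α : F) ^ n * (α : F) ^ t)).card :=
      SS_card_mul hk0 hα 1 0 t _
    rw [hpow] at h01 h10
    have hS : ∀ i i' j j' : ℕ, i % 2 = i' % 2 → j % 2 = j' % 2 →
        SS α k i j (1 : F) = SS α k i' j' (1 : F) := by
      intro i i' j j' hi hj
      rw [SS, SS, cyc2_congr hk0 hα hi, cyc2_congr hk0 hα hj]
    rcases Nat.even_or_odd n with hn | hn
    · have ht2 : t % 2 = 0 := by
        obtain ⟨r, hr⟩ := hn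
        omega
      rw [h01, h10, hS (0 + t) 0 (1 + t) 1 (by omega) (by omega),
        hS (1 + t) 1 (0 + t) 0 (by omega) (by omega)]
    · have ht2 : t % 2 = 1 := by
        obtain ⟨r, hr⟩ := hn
        omega
      rw [h01, h10, hS (0 + t) 1 (1 + t) 0 (by omega) (by omega),
        hS (1 + t) 0 (0 + t) 1 (by omega) (by omega)]
      omega
  -- total cardinality of L
  have hcardL : Multiset.card L = 8 * k * k := by
    rw [hLdef, Multiset.card_add, card_extDiff, card_extDiff]
    have c0 : Multiset.card (cyc2 α k 0).val = 2 * k := by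
      rw [← Finset.card_def]; exact card_cyc2 hα 0
    have c1 : Multiset.card (cyc2 α k 1).val = 2 * k := by
      rw [← Finset.card_def]; exact card_cyc2 hα 1
    rw [c0, c1]
    ring
  -- sum of counts over the universe equals the cardinality
  have hsum : ∑ a ∈ Finset.univ, L.count a = Multiset.card L := by
    rw [← Multiset.toFinset_sum_count_eq L]
    refine (Finset.sum_subset (Finset.subset_univ _) ?_).symm
    intro x _ hx
    exact Multiset.count_eq_zero_of_notMem (by simpa [Multiset.mem_toFinset] using hx)
  have hcarderase : (Finset.univ.erase (0 : F)).card = 4 * k := by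
    rw [Finset.card_erase_of_mem (Finset.mem_univ _), Finset.card_univ, hcard]; omega
  have hsplit : ∑ a ∈ Finset.univ, L.count a
      = L.count 0 + ∑ a ∈ Finset.univ.erase (0 : F), L.count a :=
    (Finset.add_sum_erase _ _ (Finset.mem_univ _)).symm
  have hconst : ∑ a ∈ Finset.univ.erase (0 : F), L.count a = 4 * k * m := by
    rw [Finset.sum_congr rfl (fun a ha => hm a (Finset.mem_erase.mp ha).1),
      Finset.sum_const, hcarderase, smul_eq_mul]
  have hm2k : m = 2 * k := by
    have h8 : 4 * k * m = 8 * k * k := by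
      rw [← hconst]
      have := hsplit ▸ hsum
      omega
    have h8' : 4 * k * m = 4 * k * (2 * k) := by rw [h8]; ring
    exact Nat.eq_of_mul_eq_mul_left (by omega) h8'
  -- conclude by comparing counts
  show L = (2 * k) • ((Finset.univ.erase (0 : F)).val)
  refine Multiset.ext.mpr fun a => ?_
  rw [Multiset.count_nsmul]
  by_cases ha : a = 0
  · subst ha
    rw [hzero]
    have : (0 : F) ∉ (Finset.univ.erase (0 : F)).val := by
      rw [Finset.mem_val]
      simp
    rw [Multiset.count_eq_zero_of_notMem this, Nat.mul_zero]
  · rw [hm a ha, hm2k]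
    have hmem : a ∈ (Finset.univ.erase (0 : F)).val := by
      rw [Finset.mem_val]
      exact Finset.mem_erase.mpr ⟨ha, Finset.mem_univ _⟩
    rw [Multiset.count_eq_one_of_mem (Finset.univ.erase (0 : F)).nodup hmem, Nat.mul_one]
end

section
/- Let q = 4k+1 be a prime power with k odd, α a primitive element of F_q, and D^4_i = {α^{i+4j} : 0 ≤ j ≤ k−1} for 0 ≤ i ≤ 3 the cyclotomic classes of index 4. Then the multiset D(D^4_0,D^4_1) ∪ D(D^4_0,D^4_3) ∪ D(D^4_1,D^4_0) ∪ D(D^4_3,D^4_0) equals k copies of F_q \ {0}. -/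
/-- The cyclotomic class of index 4: `D^4_i = {α^{i+4j} : 0 ≤ j ≤ k-1}`. -/
def cyc4 {F : Type*} [Field F] [DecidableEq F] (α : Fˣ) (k i : ℕ) : Finset F :=
  (Finset.range k).image fun j => (α : F) ^ (i + 4 * j)

section Aux

open Multiset

lemma extDiff_add_left {G : Type*} [Sub G] (X X' Y : Multiset G) :
    extDiff (X + X') Y = extDiff X Y + extDiff X' Y :=
  Multiset.add_bind _ _ _

lemma extDiff_add_right {G : Type*} [Sub G] (X Y Y' : Multiset G) :
    extDiff X (Y + Y') = extDiff X Y + extDiff X Y' := by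
  simp [extDiff, Multiset.bind_add]

lemma extDiff_map_mul {F : Type*} [Field F] (b : F) (X Y : Multiset F) :
    (extDiff X Y).map (fun z => b * z) = extDiff (X.map (b * ·)) (Y.map (b * ·)) := by
  simp [extDiff, Multiset.map_bind, Multiset.bind_map, Multiset.map_map, Function.comp,
    mul_sub]

lemma extDiff_map_neg {G : Type*} [AddCommGroup G] (X Y : Multiset G) :
    (extDiff X Y).map (fun z => -z) = extDiff (X.map (fun x => -x)) (Y.map (fun y => -y)) := by
  simp only [extDiff, Multiset.map_bind, Multiset.bind_map, Multiset.map_map, Function.comp]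
  exact Multiset.bind_congr fun x _ => Multiset.map_congr rfl fun y _ => by abel

lemma extDiff_swap {G : Type*} [AddCommGroup G] (X Y : Multiset G) :
    extDiff Y X = (extDiff X Y).map (fun z => -z) := by
  induction X using Multiset.induction with
  | empty => simp [extDiff]
  | cons x X ih =>
    have h1 : extDiff Y (x ::ₘ X) = Y.map (fun y => y - x) + extDiff Y X := by
      simp only [extDiff]
      rw [show (Y.bind fun y => (x ::ₘ X).map fun z => y - z)
          = Y.bind fun y => {y - x} + X.map fun z => y - z by
        refine Multiset.bind_congr fun y _ => by
          rw [Multiset.map_cons, ← Multiset.singleton_add]]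
      rw [Multiset.bind_add, Multiset.bind_singleton]
    rw [h1, ih, show extDiff (x ::ₘ X) Y = Y.map (fun y => x - y) + extDiff X Y from
      Multiset.cons_bind _ _ _, Multiset.map_add, Multiset.map_map]
    congr 1
    exact Multiset.map_congr rfl fun y _ => by simp [Function.comp]

lemma card_extDiff {G : Type*} [Sub G] (X Y : Multiset G) :
    Multiset.card (extDiff X Y) = Multiset.card X * Multiset.card Y := by
  simp only [extDiff, Multiset.card_bind, Multiset.map_map, Function.comp,
    Multiset.card_map, Multiset.map_const', Multiset.sum_replicate, smul_eq_mul]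

lemma sum_count_univ {F : Type*} [DecidableEq F] [Fintype F] (M : Multiset F) :
    ∑ a ∈ Finset.univ, M.count a = Multiset.card M := by
  rw [← Multiset.toFinset_sum_count_eq M]
  exact (Finset.sum_subset (Finset.subset_univ _) fun x _ hx =>
    Multiset.count_eq_zero_of_notMem (by simpa using hx)).symm

end Aux

section Cyc

variable {F : Type*} [Field F] [DecidableEq F] (α : Fˣ) (k : ℕ)

lemma pow_mem_cyc4 (hk : 0 < k) (hord : (α : F) ^ (4 * k) = 1) {i : ℕ} (hi : i < 4)
    (n : ℕ) (hn : n % 4 = i) : (α : F) ^ n ∈ cyc4 α k i := by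
  set j := n / 4 with hj
  have hn4 : n = i + 4 * j := by omega
  have hsplit : i + 4 * j = (i + 4 * (j % k)) + 4 * (k * (j / k)) := by
    have := Nat.mod_add_div j k
    omega
  have : (α : F) ^ n = (α : F) ^ (i + 4 * (j % k)) := by
    rw [hn4, hsplit, pow_add]
    have : (α : F) ^ (4 * (k * (j / k))) = 1 := by
      rw [show 4 * (k * (j / k)) = (4 * k) * (j / k) by ring, pow_mul, hord, one_pow]
    rw [this, mul_one]
  rw [this]
  exact Finset.mem_image.mpr ⟨j % k, Finset.mem_range.mpr (Nat.mod_lt _ hk), rfl⟩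

lemma mem_cyc4 {i : ℕ} {x : F} (hx : x ∈ cyc4 α k i) :
    ∃ j < k, x = (α : F) ^ (i + 4 * j) := by
  obtain ⟨j, hj, rfl⟩ := Finset.mem_image.mp hx
  exact ⟨j, Finset.mem_range.mp hj, rfl⟩

variable (hα : orderOf α = 4 * k) (hk : Odd k)
include hα hk

lemma upow_eq_iff (a b : ℕ) : ((α : F) ^ a = (α : F) ^ b) ↔ a ≡ b [MOD 4 * k] := by
  rw [show ((α : F) ^ a) = ((α ^ a : Fˣ) : F) by simp, show ((α : F) ^ b) = ((α ^ b : Fˣ) : F) by simp]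
  rw [← hα]
  constructor
  · intro h
    exact pow_eq_pow_iff_modEq.mp (Units.ext h)
  · intro h
    exact congrArg Units.val (pow_eq_pow_iff_modEq.mpr h)

lemma card_cyc4 {i : ℕ} (hi : i < 4) : (cyc4 α k i).card = k := by
  have hk0 : 0 < k := hk.pos
  rw [cyc4, Finset.card_image_of_injOn, Finset.card_range]
  intro a ha b hb hab
  simp only [Finset.coe_range, Set.mem_Iio] at ha hb
  have := (upow_eq_iff α k hα hk _ _).mp hab
  have h2 : (i + 4 * a) % (4 * k) = (i + 4 * b) % (4 * k) := this
  have h3 : i + 4 * a < 4 * k + i := by omega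
  rw [Nat.mod_eq_of_lt (by omega), Nat.mod_eq_of_lt (by omega)] at h2
  omega

lemma neg_one_eq : (-1 : F) = (α : F) ^ (2 * k) := by
  have hk0 : 0 < k := hk.pos
  have hsq : ((α : F) ^ (2 * k)) * ((α : F) ^ (2 * k)) = 1 := by
    rw [← pow_add, show 2 * k + 2 * k = 4 * k by ring]
    have : (α ^ (4 * k) : Fˣ) = 1 := by rw [← hα]; exact pow_orderOf_eq_one α
    calc ((α : F) ^ (4 * k)) = ((α ^ (4 * k) : Fˣ) : F) := by simp
      _ = 1 := by rw [this]; rfl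
  have hne : (α : F) ^ (2 * k) ≠ 1 := by
    intro h
    have := (upow_eq_iff α k hα hk (2 * k) 0).mp (by simpa using h)
    have h2 : (2 * k) % (4 * k) = 0 % (4 * k) := this
    rw [Nat.zero_mod, Nat.mod_eq_of_lt (by omega)] at h2
    omega
  rcases mul_self_eq_one_iff.mp hsq with h | h
  · exact absurd h hne
  · exact h.symm

lemma image_mul_cyc4 {i i' : ℕ} (hi : i < 4) (hi' : i' < 4) (h : (i + 1) % 4 = i') :
    Finset.image (fun x => (α : F) * x) (cyc4 α k i) = cyc4 α k i' := by
  have hk0 : 0 < k := hk.pos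
  have hord : (α : F) ^ (4 * k) = 1 := by
    have : (α ^ (4 * k) : Fˣ) = 1 := by rw [← hα]; exact pow_orderOf_eq_one α
    calc ((α : F) ^ (4 * k)) = ((α ^ (4 * k) : Fˣ) : F) := by simp
      _ = 1 := by rw [this]; rfl
  apply Finset.eq_of_subset_of_card_le
  · intro x hx
    obtain ⟨y, hy, rfl⟩ := Finset.mem_image.mp hx
    obtain ⟨j, hj, rfl⟩ := mem_cyc4 α k hy
    have : (α : F) * (α : F) ^ (i + 4 * j) = (α : F) ^ (i + 4 * j + 1) := by
      rw [pow_succ, mul_comm]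
    rw [this]
    exact pow_mem_cyc4 α k hk0 hord hi' _ (by omega)
  · rw [card_cyc4 α k hα hk hi', Finset.card_image_of_injective _
      (mul_right_injective₀ (Units.ne_zero α)), card_cyc4 α k hα hk hi]

lemma image_neg_cyc4 {i i' : ℕ} (hi : i < 4) (hi' : i' < 4) (h : (i + 2) % 4 = i') :
    Finset.image (fun x => -x) (cyc4 α k i) = cyc4 α k i' := by
  have hk0 : 0 < k := hk.pos
  have hord : (α : F) ^ (4 * k) = 1 := by
    have : (α ^ (4 * k) : Fˣ) = 1 := by rw [← hα]; exact pow_orderOf_eq_one α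
    calc ((α : F) ^ (4 * k)) = ((α ^ (4 * k) : Fˣ) : F) := by simp
      _ = 1 := by rw [this]; rfl
  have hneg1 : (-1 : F) = (α : F) ^ (2 * k) := neg_one_eq α k hα hk
  apply Finset.eq_of_subset_of_card_le
  · intro x hx
    obtain ⟨y, hy, rfl⟩ := Finset.mem_image.mp hx
    obtain ⟨j, hj, rfl⟩ := mem_cyc4 α k hy
    have : -((α : F) ^ (i + 4 * j)) = (α : F) ^ (2 * k + (i + 4 * j)) := by
      rw [pow_add ((α:F)) (2*k) (i+4*j), ← hneg1, neg_one_mul]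
    rw [this]
    obtain ⟨t, ht⟩ := hk
    exact pow_mem_cyc4 α k hk0 hord hi' _ (by omega)
  · rw [card_cyc4 α k hα hk hi', Finset.card_image_of_injective _
      neg_injective, card_cyc4 α k hα hk hi]

lemma map_mul_cyc4 {i i' : ℕ} (hi : i < 4) (hi' : i' < 4) (h : (i + 1) % 4 = i') :
    ((cyc4 α k i).val).map (fun x => (α : F) * x) = (cyc4 α k i').val := by
  rw [← Finset.image_val_of_injOn ((mul_right_injective₀ (Units.ne_zero α)).injOn),
    image_mul_cyc4 α k hα hk hi hi' h]

lemma map_neg_cyc4 {i i' : ℕ} (hi : i < 4) (hi' : i' < 4) (h : (i + 2) % 4 = i') :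
    ((cyc4 α k i).val).map (fun x => -x) = (cyc4 α k i').val := by
  rw [← Finset.image_val_of_injOn (neg_injective.injOn),
    image_neg_cyc4 α k hα hk hi hi' h]

lemma cyc4_disj {i i' : ℕ} (hi : i < 4) (hi' : i' < 4) (hpar : i % 2 ≠ i' % 2)
    {x : F} (h1 : x ∈ cyc4 α k i) (h2 : x ∈ cyc4 α k i') : False := by
  obtain ⟨j, hj, rfl⟩ := mem_cyc4 α k h1
  obtain ⟨j', hj', heq⟩ := mem_cyc4 α k h2
  have hmod := (upow_eq_iff α k hα hk _ _).mp heq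
  have h2' := Nat.ModEq.of_dvd (⟨2 * k, by ring⟩ : (2:ℕ) ∣ 4 * k) hmod
  have : (i + 4 * j) % 2 = (i' + 4 * j') % 2 := h2'
  omega

end Cyc

theorem stmt10 {F : Type*} [Field F] [Fintype F] [DecidableEq F]
    (k : ℕ) (hk : Odd k) (hcard : Fintype.card F = 4 * k + 1)
    (α : Fˣ) (hα : orderOf α = 4 * k) :
    extDiff (cyc4 α k 0).val (cyc4 α k 1).val +
      extDiff (cyc4 α k 0).val (cyc4 α k 3).val +
      extDiff (cyc4 α k 1).val (cyc4 α k 0).val +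
      extDiff (cyc4 α k 3).val (cyc4 α k 0).val =
    k • ((Finset.univ.erase (0 : F)).val) := by
  classical
  have hk0 : 0 < k := hk.pos
  set D0 := (cyc4 α k 0).val with hD0
  set D1 := (cyc4 α k 1).val with hD1
  set D2 := (cyc4 α k 2).val with hD2
  set D3 := (cyc4 α k 3).val with hD3
  set Q := D0 + D2 with hQ
  set N := D1 + D3 with hN
  -- map facts
  have hm01 : D0.map (fun x => (α : F) * x) = D1 := map_mul_cyc4 α k hα hk (by omega) (by omega) rfl
  have hm12 : D1.map (fun x => (α : F) * x) = D2 := map_mul_cyc4 α k hα hk (by omega) (by omega) rfl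
  have hm23 : D2.map (fun x => (α : F) * x) = D3 := map_mul_cyc4 α k hα hk (by omega) (by omega) rfl
  have hm30 : D3.map (fun x => (α : F) * x) = D0 := map_mul_cyc4 α k hα hk (by omega) (by omega) rfl
  have hn02 : D0.map (fun x => -x) = D2 := map_neg_cyc4 α k hα hk (by omega) (by omega) rfl
  have hn13 : D1.map (fun x => -x) = D3 := map_neg_cyc4 α k hα hk (by omega) (by omega) rfl
  have hn20 : D2.map (fun x => -x) = D0 := map_neg_cyc4 α k hα hk (by omega) (by omega) rfl
  have hn31 : D3.map (fun x => -x) = D1 := map_neg_cyc4 α k hα hk (by omega) (by omega) rfl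
  -- Step A : LHS = extDiff Q N
  have e1 : extDiff D1 D0 = extDiff D2 D3 := by
    rw [extDiff_swap D0 D1, extDiff_map_neg, hn02, hn13]
  have e2 : extDiff D3 D0 = extDiff D2 D1 := by
    rw [extDiff_swap D0 D3, extDiff_map_neg, hn02, hn31]
  have hQN : extDiff D0 D1 + extDiff D0 D3 + extDiff D1 D0 + extDiff D3 D0
      = extDiff Q N := by
    rw [e1, e2, hQ, hN, extDiff_add_left, extDiff_add_right, extDiff_add_right]
    abel
  rw [hQN]
  -- Step B : symmetry
  have hsym : ∀ c : F, (extDiff Q N).count c = (extDiff Q N).count ((α : F) * c) := by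
    intro c
    set β : F := -(α : F) with hβdef
    have hβ : β ≠ 0 := neg_ne_zero.mpr (Units.ne_zero α)
    have h1 : (extDiff Q N).count c = ((extDiff Q N).map (fun z => β * z)).count (β * c) :=
      (Multiset.count_map_eq_count' _ _ (mul_right_injective₀ hβ) c).symm
    have hmapβ : ∀ M : Multiset F, M.map (fun z => β * z)
        = (M.map (fun z => (α : F) * z)).map (fun z => -z) := by
      intro M
      rw [Multiset.map_map]
      exact Multiset.map_congr rfl fun x _ => by simp [hβdef]
    have hQβ : Q.map (fun z => β * z) = N := by
      rw [hmapβ, hQ, Multiset.map_add, hm01, hm23, Multiset.map_add, hn13]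
      rw [show (D3.map fun x => -x) = D1 from hn31, hN]
      exact add_comm _ _
    have hNβ : N.map (fun z => β * z) = Q := by
      rw [hmapβ, hN, Multiset.map_add, hm12, hm30, Multiset.map_add, hn20]
      rw [show (D0.map fun x => -x) = D2 from hn02, hQ]
    have h2 : (extDiff Q N).map (fun z => β * z) = extDiff N Q := by
      rw [extDiff_map_mul, hQβ, hNβ]
    have h3 : (extDiff N Q).count (β * c) = (extDiff Q N).count ((α : F) * c) := by
      rw [extDiff_swap Q N]
      have : β * c = -((α : F) * c) := by rw [hβdef, neg_mul]
      rw [this]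
      exact Multiset.count_map_eq_count' _ _ neg_injective ((α : F) * c)
    rw [h1, h2, h3]
  -- Step C : count constant on nonzero elements
  have hpow : ∀ n : ℕ, (extDiff Q N).count ((α : F) ^ n) = (extDiff Q N).count 1 := by
    intro n
    induction n with
    | zero => simp
    | succ n ih => rw [pow_succ, mul_comm, ← hsym ((α : F) ^ n)]; exact ih
  have hgen : ∀ c : F, c ≠ 0 → ∃ n : ℕ, c = (α : F) ^ n := by
    intro c hc
    have hcardu : Fintype.card Fˣ = 4 * k := by
      rw [Fintype.card_units, hcard]; omega
    have hinj : Set.InjOn (fun n => α ^ n) (Finset.range (4 * k)) := by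
      intro a ha b hb hab
      simp only [Finset.coe_range, Set.mem_Iio] at ha hb
      have := pow_eq_pow_iff_modEq.mp hab
      rw [hα] at this
      have h2 : a % (4 * k) = b % (4 * k) := this
      rw [Nat.mod_eq_of_lt ha, Nat.mod_eq_of_lt hb] at h2
      exact h2
    have himg : (Finset.range (4 * k)).image (fun n => α ^ n) = Finset.univ := by
      apply Finset.eq_univ_of_card
      rw [Finset.card_image_of_injOn hinj, Finset.card_range, hcardu]
    have hmem : Units.mk0 c hc ∈ (Finset.range (4 * k)).image (fun n => α ^ n) := by
      rw [himg]; exact Finset.mem_univ _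
    obtain ⟨n, _, hn⟩ := Finset.mem_image.mp hmem
    refine ⟨n, ?_⟩
    have : ((α ^ n : Fˣ) : F) = c := by rw [hn]; rfl
    rw [← this]; simp
  have hconst : ∀ c : F, c ≠ 0 → (extDiff Q N).count c = (extDiff Q N).count 1 := by
    intro c hc
    obtain ⟨n, rfl⟩ := hgen c hc
    exact hpow n
  -- Step D : count at 0 is 0
  have hzero : (extDiff Q N).count 0 = 0 := by
    rw [Multiset.count_eq_zero]
    intro hmem
    simp only [extDiff, Multiset.mem_bind, Multiset.mem_map] at hmem
    obtain ⟨x, hx, y, hy, hxy⟩ := hmem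
    have hxy' : x = y := by linear_combination hxy
    subst hxy'
    rw [hQ, Multiset.mem_add] at hx
    rw [hN, Multiset.mem_add] at hy
    rcases hx with hx | hx <;> rcases hy with hy | hy
    · exact cyc4_disj α k hα hk (by omega) (by omega) (by omega) hx hy
    · exact cyc4_disj α k hα hk (by omega) (by omega) (by omega) hx hy
    · exact cyc4_disj α k hα hk (by omega) (by omega) (by omega) hx hy
    · exact cyc4_disj α k hα hk (by omega) (by omega) (by omega) hx hy
  -- Step E : the common count is k
  have hcardQ : Multiset.card Q = 2 * k := by
    rw [hQ, Multiset.card_add]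
    have h0 : Multiset.card D0 = k := card_cyc4 α k hα hk (by omega)
    have h2 : Multiset.card D2 = k := card_cyc4 α k hα hk (by omega)
    omega
  have hcardN : Multiset.card N = 2 * k := by
    rw [hN, Multiset.card_add]
    have h1 : Multiset.card D1 = k := card_cyc4 α k hα hk (by omega)
    have h3 : Multiset.card D3 = k := card_cyc4 α k hα hk (by omega)
    omega
  have htotal : ∑ a ∈ Finset.univ, (extDiff Q N).count a = 4 * k * k := by
    rw [sum_count_univ, card_extDiff, hcardQ, hcardN]; ring
  have hsplit : ∑ a ∈ Finset.univ, (extDiff Q N).count a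
      = (4 * k) * (extDiff Q N).count 1 := by
    rw [← Finset.sum_erase_add _ _ (Finset.mem_univ (0 : F)), hzero, add_zero]
    rw [Finset.sum_congr rfl (fun x hx => hconst x (Finset.ne_of_mem_erase hx))]
    rw [Finset.sum_const, Finset.card_erase_of_mem (Finset.mem_univ _), Finset.card_univ,
      hcard, smul_eq_mul]
    congr 1
  have hone : (extDiff Q N).count 1 = k := by
    have : (4 * k) * (extDiff Q N).count 1 = (4 * k) * k := by
      rw [← hsplit, htotal]
    exact Nat.eq_of_mul_eq_mul_left (by omega) this
  -- Step F : conclude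
  ext c
  rw [Multiset.count_nsmul]
  by_cases hc : c = 0
  · subst hc
    rw [hzero, Multiset.count_eq_zero_of_notMem
      (fun h => Finset.notMem_erase (0:F) Finset.univ (Finset.mem_val.mp h)), mul_zero]
  · rw [hconst c hc, hone,
      Multiset.count_eq_one_of_mem (Finset.univ.erase (0 : F)).nodup
        (Finset.mem_val.mpr (Finset.mem_erase.mpr ⟨hc, Finset.mem_univ c⟩)), mul_one]
end
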